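/- If T is a rearrangement on symmetrizable functions on ℝⁿ and φ : ℝ → ℝ is right-continuous and increasing, then for every symmetrizable f, the composition φ ∘ f is symmetrizable and φ(Tf) = T(φ ∘ f) almost everywhere. -/

import Mathlib

open MeasureTheory Set

/-- The essential infimum of a real-valued function, computed in `EReal`. -/
noncomputable def essInfE {n : ℕ} (f : EuclideanSpace ℝ (Fin n) → ℝ) : EReal :=
  essInf (fun x => (f x : EReal)) volume

/-- A function `f : ℝⁿ → ℝ` is symmetrizable if it is measurable and every
super-level set `{x | f x > t}` with `t > essinf f` has finite Lebesgue measure. -/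
def Symmetrizable {n : ℕ} (f : EuclideanSpace ℝ (Fin n) → ℝ) : Prop :=
  Measurable f ∧ ∀ t : ℝ, essInfE f < (t : EReal) → volume {x | t < f x} < ⊤

open Filter Topology

/-! For a set `A` of finite measure let `A*` be the level set `{0 < T 1_A}`. Since `T` is a.e.
monotone and preserves the measures of strict level sets, `p ≤ q` a.e. with `{s < p}`, `{s < q}` of
equal finite measure forces `{s < T p} =ᵐ {s < T q}`; comparing `p` with `p ⊔ q` and with
two-valued step functions shows that `{s < T p} =ᵐ {s < p}*` whenever `{s < p}` has finite measure.
Writing `{c ≤ p}` as a decreasing intersection of strict level sets and using continuity from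
above, also `{c ≤ T p} =ᵐ {c ≤ p}*` for `c > essinf p`.

Right-continuity makes `{y | q ≤ φ y}` a closed half-line `[c, ∞)`, so above the essential infimum
`{q ≤ φ ∘ T f} = {c ≤ T f} =ᵐ {c ≤ f}* = {q ≤ φ ∘ f}* =ᵐ {q ≤ T (φ ∘ f)}`, while below it both sets
are conull (here right-continuity gives `essinf (φ ∘ f) ≤ φ y` for all `y ≥ essinf f`). Equal
rational level sets give equal functions a.e. -/

lemma setOf_le_eq_iInter_setOf_lt {α : Type*} (g : α → ℝ) {u : ℕ → ℝ} {c : ℝ}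
    (hu : ∀ k, u k < c) (hlim : Tendsto u atTop (𝓝 c)) :
    {x | c ≤ g x} = ⋂ k, {x | u k < g x} := by
  ext x
  simp only [mem_ofPred_eq, mem_iInter]
  exact ⟨fun h k => (hu k).trans_le h, fun h => le_of_tendsto' hlim fun k => (h k).le⟩

lemma Filter.EventuallyEq.of_forall_setOf_le {α : Type*} {l : Filter α} [CountableInterFilter l]
    {u v : α → ℝ} (h : ∀ q : ℚ, {x | (q : ℝ) ≤ u x} =ᶠ[l] {x | (q : ℝ) ≤ v x}) : u =ᶠ[l] v := by
  filter_upwards [eventually_countable_forall.2 fun q => eventuallyEq_set.1 (h q)] with x hx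
  exact le_antisymm (le_of_forall_rat_lt_imp_le fun q hq => (hx q).1 hq.le)
    (le_of_forall_rat_lt_imp_le fun q hq => (hx q).2 hq.le)

lemma Monotone.exists_le_apply_iff_le {φ : ℝ → ℝ} (hφ : Monotone φ)
    (hrc : ∀ a, ContinuousWithinAt φ (Ici a) a) {q y₀ y₁ : ℝ} (h₀ : φ y₀ < q) (h₁ : q ≤ φ y₁) :
    ∃ c, ∀ y, q ≤ φ y ↔ c ≤ y := by
  set S := {y | q ≤ φ y}
  have hbdd : BddBelow S := ⟨y₀, fun y hy => (hφ.reflect_lt (h₀.trans_le hy)).le⟩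
  have hgt : ∀ z, sInf S < z → q ≤ φ z := fun z hz => by
    obtain ⟨w, hw, hwz⟩ := exists_lt_of_csInf_lt ⟨y₁, h₁⟩ hz
    exact hw.trans (hφ hwz.le)
  refine ⟨sInf S, fun y => ⟨fun hy => csInf_le hbdd hy, fun hy => ?_⟩⟩
  rcases hy.eq_or_lt with rfl | hlt
  · exact _root_.ge_of_tendsto ((hrc _).mono Ioi_subset_Ici_self)
      (eventually_nhdsWithin_of_forall hgt)
  · exact hgt y hlt

section

variable {n : ℕ}

local notation "E" => EuclideanSpace ℝ (Fin n)

lemma ae_essInfE_le (f : E → ℝ) : ∀ᵐ x, essInfE f ≤ (f x : EReal) :=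
  ae_essInf_le

lemma le_essInfE_of_ae {f : E → ℝ} {c : EReal} (h : ∀ᵐ x, c ≤ (f x : EReal)) :
    c ≤ essInfE f :=
  le_essInf_of_ae_le c h

lemma ae_le_of_le_essInfE {f : E → ℝ} {t : ℝ} (h : (t : EReal) ≤ essInfE f) :
    ∀ᵐ x, t ≤ f x :=
  (ae_essInfE_le f).mono fun _ hx => EReal.coe_le_coe_iff.1 (h.trans hx)

lemma ae_lt_of_lt_essInfE {f : E → ℝ} {t : ℝ} (h : (t : EReal) < essInfE f) :
    ∀ᵐ x, t < f x :=
  (ae_essInfE_le f).mono fun _ hx => EReal.coe_lt_coe_iff.1 (h.trans_le hx)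

lemma frequently_lt_of_essInfE_lt {f : E → ℝ} {t : ℝ} (h : essInfE f < t) :
    ∃ᵐ x, f x < t := by
  by_contra hc
  rw [not_frequently] at hc
  exact h.not_ge (le_essInfE_of_ae (hc.mono fun x hx => EReal.coe_le_coe_iff.2 (not_lt.1 hx)))

lemma essInfE_mono {f g : E → ℝ} (h : f ≤ g) : essInfE f ≤ essInfE g :=
  essInf_mono_ae (ae_of_all _ fun x => EReal.coe_le_coe_iff.2 (h x))

lemma essInfE_comp_le {φ : ℝ → ℝ} (hφ : Monotone φ)
    (hrc : ∀ a, ContinuousWithinAt φ (Ici a) a) {f : E → ℝ} {y : ℝ} (hy : essInfE f ≤ y) :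
    essInfE (φ ∘ f) ≤ φ y := by
  have hlim : Tendsto (fun z => (φ z : EReal)) (𝓝[>] y) (𝓝 (φ y : EReal)) :=
    (continuous_coe_real_ereal.tendsto _).comp ((hrc y).mono Ioi_subset_Ici_self)
  refine ge_of_tendsto hlim (eventually_nhdsWithin_of_forall fun z hz => ?_)
  have hfz : ∃ᵐ x, f x < z :=
    frequently_lt_of_essInfE_lt (hy.trans_lt (EReal.coe_lt_coe_iff.2 hz))
  exact liminf_le_of_frequently_le' (hfz.mono fun x hx => EReal.coe_le_coe_iff.2 (hφ hx.le))

lemma essInfE_le_of_measure_setOf_lt_eq {p q : E → ℝ} (hq : Symmetrizable q)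
    (h : ∀ t : ℝ, volume {x | t < p x} = volume {x | t < q x}) : essInfE p ≤ essInfE q := by
  refine EReal.ge_of_forall_gt_iff_ge.1 fun t ht => ?_
  by_contra! hqt
  have hfin : volume {x | t < q x} ≠ ⊤ := (hq.2 t hqt).ne
  have huniv : volume {x | t < q x} = volume (univ : Set E) :=
    (h t).symm.trans (measure_congr (ae_eq_univ.2 (ae_iff.1 (ae_lt_of_lt_essInfE ht))))
  have hq_ae : ∀ᵐ x, t < q x := ae_iff.2 (ae_eq_univ.1 (ae_eq_of_subset_of_measure_ge
    (subset_univ _) huniv.ge (hq.1 measurableSet_Ioi).nullMeasurableSet (huniv ▸ hfin)))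
  exact hqt.not_ge (le_essInfE_of_ae (hq_ae.mono fun x hx => EReal.coe_le_coe_iff.2 hx.le))

lemma Symmetrizable.measure_setOf_le_ne_top {p : E → ℝ} (hp : Symmetrizable p) {c : ℝ}
    (hc : essInfE p < c) : volume {x | c ≤ p x} ≠ ⊤ := by
  obtain ⟨t, hpt, htc⟩ := EReal.exists_between_coe_real hc
  exact ne_top_of_le_ne_top (hp.2 t hpt).ne
    (measure_mono fun x hx => (EReal.coe_lt_coe_iff.1 htc).trans_le hx)

lemma Symmetrizable.sup {p q : E → ℝ} (hp : Symmetrizable p) (hq : Symmetrizable q) :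
    Symmetrizable (p ⊔ q) := by
  refine ⟨hp.1.sup hq.1, fun t ht => ?_⟩
  have hset : {x | t < (p ⊔ q) x} = {x | t < p x} ∪ {x | t < q x} := by
    ext x; simp
  rw [hset]
  exact (measure_union_le _ _).trans_lt (ENNReal.add_lt_top.2
    ⟨hp.2 t ((essInfE_mono le_sup_left).trans_lt ht),
      hq.2 t ((essInfE_mono le_sup_right).trans_lt ht)⟩)

section TwoValued

open scoped Classical in
noncomputable def twoValued (A : Set E) (r R : ℝ) : E → ℝ :=
  A.piecewise (fun _ => R) fun _ => r

variable {A B : Set (EuclideanSpace ℝ (Fin n))} {r R : ℝ}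

lemma setOf_lt_twoValued {s : ℝ} (hrs : r ≤ s) (hsR : s < R) :
    {x | s < twoValued A r R x} = A := by
  ext x
  by_cases hx : x ∈ A <;> simp [twoValued, hx, hsR, hrs]

lemma twoValued_mono_set (hAB : A ⊆ B) (hrR : r ≤ R) : twoValued A r R ≤ twoValued B r R := by
  intro x
  by_cases hx : x ∈ A
  · simp [twoValued, hx, hAB hx]
  · by_cases hxB : x ∈ B <;> simp [twoValued, hx, hxB, hrR]

lemma symmetrizable_twoValued (hA : MeasurableSet A) (hAfin : volume A ≠ ⊤) (hrR : r ≤ R) :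
    Symmetrizable (twoValued A r R) := by
  have hr : ∀ x, r ≤ twoValued A r R x := fun x => by
    by_cases hx : x ∈ A <;> simp [twoValued, hx, hrR]
  refine ⟨measurable_const.piecewise hA measurable_const, fun t ht => ?_⟩
  have hrt : r < t := EReal.coe_lt_coe_iff.1
    ((le_essInfE_of_ae (ae_of_all _ fun x => EReal.coe_le_coe_iff.2 (hr x))).trans_lt ht)
  refine (measure_mono fun x hx => ?_).trans_lt hAfin.lt_top
  by_contra hxA
  simp [twoValued, hxA] at hx
  linarith

end TwoValued

structure IsRearrangement (T : (E → ℝ) → (E → ℝ)) : Prop where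
  symmetrizable : ∀ f, Symmetrizable f → Symmetrizable (T f)
  measure_setOf_lt : ∀ f, Symmetrizable f → ∀ t : ℝ,
    volume {x | t < T f x} = volume {x | t < f x}
  ae_mono : ∀ f g, Symmetrizable f → Symmetrizable g → f ≤ᵐ[volume] g → T f ≤ᵐ[volume] T g

def rearrangedSet (T : (E → ℝ) → (E → ℝ)) (A : Set E) : Set E :=
  {x | 0 < T (twoValued A 0 1) x}

namespace IsRearrangement

variable {T : (EuclideanSpace ℝ (Fin n) → ℝ) → (EuclideanSpace ℝ (Fin n) → ℝ)}
  (hT : IsRearrangement T)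
include hT

lemma essInfE_le {f : E → ℝ} (hf : Symmetrizable f) : essInfE f ≤ essInfE (T f) :=
  essInfE_le_of_measure_setOf_lt_eq (hT.symmetrizable f hf) fun t =>
    (hT.measure_setOf_lt f hf t).symm

lemma ae_essInfE_le {f : E → ℝ} (hf : Symmetrizable f) : ∀ᵐ x, essInfE f ≤ (T f x : EReal) :=
  (_root_.ae_essInfE_le (T f)).mono fun _ hx => (hT.essInfE_le hf).trans hx

lemma setOf_lt_ae_eq_of_ae_le {p q : E → ℝ} (hp : Symmetrizable p) (hq : Symmetrizable q)
    (hpq : p ≤ᵐ[volume] q) {s : ℝ} (hμ : volume {x | s < p x} = volume {x | s < q x})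
    (hfin : volume {x | s < q x} ≠ ⊤) :
    {x | s < T p x} =ᵐ[volume] {x | s < T q x} := by
  refine ae_eq_of_ae_subset_of_measure_ge ?_ ?_ ?_ ?_
  · filter_upwards [hT.ae_mono p q hp hq hpq] with x hx hsx using hsx.trans_le hx
  · rw [hT.measure_setOf_lt p hp, hT.measure_setOf_lt q hq, hμ]
  · exact ((hT.symmetrizable p hp).1 measurableSet_Ioi).nullMeasurableSet
  · rwa [hT.measure_setOf_lt q hq]

lemma setOf_lt_ae_eq_of_setOf_lt_eq {p q : E → ℝ} (hp : Symmetrizable p) (hq : Symmetrizable q)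
    {s : ℝ} (hpq : {x | s < p x} = {x | s < q x}) (hfin : volume {x | s < p x} ≠ ⊤) :
    {x | s < T p x} =ᵐ[volume] {x | s < T q x} := by
  have hsup : {x | s < (p ⊔ q) x} = {x | s < p x} := by
    rw [← union_self {x | s < p x}]
    nth_rewrite 2 [hpq]
    ext x
    simp
  have hfin' : volume {x | s < (p ⊔ q) x} ≠ ⊤ := hsup ▸ hfin
  exact (hT.setOf_lt_ae_eq_of_ae_le hp (hp.sup hq) (ae_of_all _ fun _ => le_sup_left)
    (congrArg volume hsup.symm) hfin').trans
    (hT.setOf_lt_ae_eq_of_ae_le hq (hp.sup hq) (ae_of_all _ fun _ => le_sup_right)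
      (congrArg volume (hsup.trans hpq).symm) hfin').symm

lemma setOf_lt_ae_eq_setOf_lt {p : E → ℝ} (hp : Symmetrizable p) {s s' : ℝ}
    (hss' : {x | s < p x} = {x | s' < p x}) (hfin : volume {x | s < p x} ≠ ⊤) :
    {x | s < T p x} =ᵐ[volume] {x | s' < T p x} := by
  have hmeas : ∀ t, NullMeasurableSet {x | t < T p x} :=
    fun t => ((hT.symmetrizable p hp).1 measurableSet_Ioi).nullMeasurableSet
  have hμ : ∀ t, volume {x | t < T p x} = volume {x | t < p x} := hT.measure_setOf_lt p hp
  have hsub : ∀ {t t' : ℝ}, t ≤ t' → {x | t' < T p x} ⊆ {x | t < T p x} :=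
    fun h _ hx => h.trans_lt hx
  rcases le_total s s' with h | h
  · refine (ae_eq_of_subset_of_measure_ge (hsub h) ?_ (hmeas s') ?_).symm
    · rw [hμ, hμ, hss']
    · rwa [hμ]
  · refine ae_eq_of_subset_of_measure_ge (hsub h) ?_ (hmeas s) ?_
    · rw [hμ, hμ, hss']
    · rwa [hμ, ← hss']

lemma setOf_lt_twoValued_ae_eq_rearrangedSet {A : Set E} (hA : MeasurableSet A)
    (hAfin : volume A ≠ ⊤) (s : ℝ) :
    {x | s < T (twoValued A s (s + 1)) x} =ᵐ[volume] rearrangedSet T A := by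
  set g := twoValued A (min s 0) (max s 0 + 1)
  have hg : Symmetrizable g :=
    symmetrizable_twoValued hA hAfin (by linarith [min_le_max (a := s) (b := 0)])
  have hgs : {x | s < g x} = A :=
    setOf_lt_twoValued (min_le_left _ _) (by linarith [le_max_left s 0])
  have hg0 : {x | 0 < g x} = A :=
    setOf_lt_twoValued (min_le_right _ _) (by linarith [le_max_right s 0])
  have hAs : {x | s < twoValued A s (s + 1) x} = A := setOf_lt_twoValued le_rfl (lt_add_one s)
  have h₁ : {x | s < T (twoValued A s (s + 1)) x} =ᵐ[volume] {x | s < T g x} :=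
    hT.setOf_lt_ae_eq_of_setOf_lt_eq (symmetrizable_twoValued hA hAfin (by linarith)) hg
      (hAs.trans hgs.symm) (by rwa [hAs])
  have h₂ : {x | s < T g x} =ᵐ[volume] {x | 0 < T g x} :=
    hT.setOf_lt_ae_eq_setOf_lt hg (hgs.trans hg0.symm) (by rwa [hgs])
  have h₃ : {x | 0 < T g x} =ᵐ[volume] rearrangedSet T A :=
    hT.setOf_lt_ae_eq_of_setOf_lt_eq hg (symmetrizable_twoValued hA hAfin zero_le_one)
      (hg0.trans (setOf_lt_twoValued le_rfl zero_lt_one).symm) (by rwa [hg0])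
  exact (h₁.trans h₂).trans h₃

lemma setOf_lt_ae_eq_rearrangedSet {p : E → ℝ} (hp : Symmetrizable p) {s : ℝ}
    (hfin : volume {x | s < p x} ≠ ⊤) :
    {x | s < T p x} =ᵐ[volume] rearrangedSet T {x | s < p x} :=
  have hA := hp.1 measurableSet_Ioi
  (hT.setOf_lt_ae_eq_of_setOf_lt_eq hp (symmetrizable_twoValued hA hfin (by linarith))
    (setOf_lt_twoValued le_rfl (lt_add_one s)).symm hfin).trans
    (hT.setOf_lt_twoValued_ae_eq_rearrangedSet hA hfin s)

variable {A B : Set (EuclideanSpace ℝ (Fin n))}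

lemma measure_rearrangedSet (hA : MeasurableSet A) (hAfin : volume A ≠ ⊤) :
    volume (rearrangedSet T A) = volume A := by
  rw [rearrangedSet, hT.measure_setOf_lt _ (symmetrizable_twoValued hA hAfin zero_le_one),
    setOf_lt_twoValued le_rfl zero_lt_one]

lemma measurableSet_rearrangedSet (hA : MeasurableSet A) (hAfin : volume A ≠ ⊤) :
    MeasurableSet (rearrangedSet T A) :=
  (hT.symmetrizable _ (symmetrizable_twoValued hA hAfin zero_le_one)).1 measurableSet_Ioi

lemma rearrangedSet_ae_le (hA : MeasurableSet A) (hB : MeasurableSet B) (hBfin : volume B ≠ ⊤)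
    (hAB : A ⊆ B) : rearrangedSet T A ≤ᵐ[volume] rearrangedSet T B := by
  have hAfin : volume A ≠ ⊤ := ne_top_of_le_ne_top hBfin (measure_mono hAB)
  filter_upwards [hT.ae_mono _ _ (symmetrizable_twoValued hA hAfin zero_le_one)
    (symmetrizable_twoValued hB hBfin zero_le_one)
    (ae_of_all _ (twoValued_mono_set hAB zero_le_one))] with x hx h0 using h0.trans_le hx

lemma rearrangedSet_iInter_ae_eq {A : ℕ → Set E} (hA : ∀ k, MeasurableSet (A k))
    (hanti : Antitone A) (hfin : volume (A 0) ≠ ⊤) :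
    rearrangedSet T (⋂ k, A k) =ᵐ[volume] ⋂ k, rearrangedSet T (A k) := by
  have hfin' : ∀ k, volume (A k) ≠ ⊤ := fun k =>
    ne_top_of_le_ne_top hfin (measure_mono (hanti (Nat.zero_le k)))
  have hI : MeasurableSet (⋂ k, A k) := MeasurableSet.iInter hA
  have hIfin : volume (⋂ k, A k) ≠ ⊤ := ne_top_of_le_ne_top hfin (measure_mono (iInter_subset _ 0))
  refine ae_eq_of_ae_subset_of_measure_ge ?_ ?_
    (hT.measurableSet_rearrangedSet hI hIfin).nullMeasurableSet ?_
  · have h := fun k => hT.rearrangedSet_ae_le hI (hA k) (hfin' k) (iInter_subset A k)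
    filter_upwards [ae_all_iff.2 h] with x hx hmem using mem_iInter.2 fun k => hx k hmem
  · calc volume (⋂ k, rearrangedSet T (A k)) ≤ ⨅ k, volume (rearrangedSet T (A k)) :=
          le_iInf fun k => measure_mono (iInter_subset _ k)
      _ = ⨅ k, volume (A k) := by simp_rw [hT.measure_rearrangedSet (hA _) (hfin' _)]
      _ = volume (⋂ k, A k) :=
          (hanti.measure_iInter (fun k => (hA k).nullMeasurableSet) ⟨0, hfin⟩).symm
      _ = volume (rearrangedSet T (⋂ k, A k)) := (hT.measure_rearrangedSet hI hIfin).symm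
  · exact ne_top_of_le_ne_top (hT.measure_rearrangedSet (hA 0) hfin ▸ hfin)
      (measure_mono (iInter_subset _ 0))

lemma setOf_le_ae_eq_rearrangedSet {p : E → ℝ} (hp : Symmetrizable p) {c : ℝ}
    (hc : essInfE p < c) :
    {x | c ≤ T p x} =ᵐ[volume] rearrangedSet T {x | c ≤ p x} := by
  obtain ⟨t, hpt, htc⟩ := EReal.exists_between_coe_real hc
  obtain ⟨u, hu_mono, hu_mem, hu_lim⟩ :=
    exists_seq_strictMono_tendsto' (EReal.coe_lt_coe_iff.1 htc)
  have hu_lt : ∀ k, u k < c := fun k => (hu_mem k).2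
  have hfin : ∀ k, volume {x | u k < p x} ≠ ⊤ := fun k =>
    ne_top_of_le_ne_top (hp.2 t hpt).ne (measure_mono fun x hx => (hu_mem k).1.trans hx)
  rw [setOf_le_eq_iInter_setOf_lt (T p) hu_lt hu_lim, setOf_le_eq_iInter_setOf_lt p hu_lt hu_lim]
  exact (Filter.EventuallyEq.countable_iInter fun k =>
      hT.setOf_lt_ae_eq_rearrangedSet hp (hfin k)).trans
    (hT.rearrangedSet_iInter_ae_eq (fun k => hp.1 measurableSet_Ioi)
      (fun j k hjk x hx => (hu_mono.monotone hjk).trans_lt hx) (hfin 0)).symm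

end IsRearrangement

variable {φ : ℝ → ℝ}

lemma essInfE_lt_of_essInfE_comp_lt {f : E → ℝ} {q c : ℝ} (hc : ∀ y, q ≤ φ y ↔ c ≤ y)
    (hq : essInfE (φ ∘ f) < q) : essInfE f < c := by
  by_contra! h
  exact hq.not_ge (le_essInfE_of_ae ((ae_le_of_le_essInfE h).mono fun x hx =>
    EReal.coe_le_coe_iff.2 ((hc _).2 hx)))

lemma Symmetrizable.comp_monotone {f : E → ℝ} (hf : Symmetrizable f) (hφ : Monotone φ)
    (hrc : ∀ a, ContinuousWithinAt φ (Ici a) a) : Symmetrizable (φ ∘ f) := by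
  refine ⟨hφ.measurable.comp hf.1, fun t ht => ?_⟩
  obtain ⟨t', ht', ht't⟩ := EReal.exists_between_coe_real ht
  have hsub : {x | t < (φ ∘ f) x} ⊆ {x | t' ≤ φ (f x)} := fun x hx =>
    (EReal.coe_lt_coe_iff.1 ht't).le.trans hx.le
  refine (measure_mono hsub).trans_lt ?_
  by_cases hne : ∃ y, t' ≤ φ y
  · obtain ⟨y₁, hy₁⟩ := hne
    obtain ⟨x₀, hx₀⟩ := (frequently_lt_of_essInfE_lt ht').exists
    obtain ⟨c, hc⟩ := hφ.exists_le_apply_iff_le hrc hx₀ hy₁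
    simp only [hc]
    exact (hf.measure_setOf_le_ne_top (essInfE_lt_of_essInfE_comp_lt hc ht')).lt_top
  · push Not at hne
    simp [fun y => (hne y).not_ge]

lemma IsRearrangement.setOf_le_comp_ae_eq_of_le_essInfE
    {T : (E → ℝ) → (E → ℝ)} (hT : IsRearrangement T) (hφ : Monotone φ)
    (hrc : ∀ a, ContinuousWithinAt φ (Ici a) a) {f : E → ℝ} (hf : Symmetrizable f) {q : ℝ}
    (hq : (q : EReal) ≤ essInfE (φ ∘ f)) :
    {x | q ≤ φ (T f x)} =ᵐ[volume] {x | q ≤ T (φ ∘ f) x} := by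
  have h₁ : ∀ᵐ x, q ≤ φ (T f x) := (hT.ae_essInfE_le hf).mono fun x hx =>
    EReal.coe_le_coe_iff.1 (hq.trans (essInfE_comp_le hφ hrc hx))
  have h₂ : ∀ᵐ x, q ≤ T (φ ∘ f) x := (hT.ae_essInfE_le (hf.comp_monotone hφ hrc)).mono
    fun x hx => EReal.coe_le_coe_iff.1 (hq.trans hx)
  filter_upwards [h₁, h₂] with x hx₁ hx₂ using propext (iff_of_true hx₁ hx₂)

lemma IsRearrangement.setOf_le_comp_ae_eq_of_essInfE_lt
    {T : (E → ℝ) → (E → ℝ)} (hT : IsRearrangement T) (hφ : Monotone φ)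
    (hrc : ∀ a, ContinuousWithinAt φ (Ici a) a) {f : E → ℝ} (hf : Symmetrizable f) {q : ℝ}
    (hq : essInfE (φ ∘ f) < q) :
    {x | q ≤ φ (T f x)} =ᵐ[volume] {x | q ≤ T (φ ∘ f) x} := by
  have hg := hT.setOf_le_ae_eq_rearrangedSet (hf.comp_monotone hφ hrc) hq
  by_cases hne : ∃ y, q ≤ φ y
  · obtain ⟨y₁, hy₁⟩ := hne
    obtain ⟨x₀, hx₀⟩ := (frequently_lt_of_essInfE_lt hq).exists
    obtain ⟨c, hc⟩ := hφ.exists_le_apply_iff_le hrc hx₀ hy₁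
    have hTf : {x | q ≤ φ (T f x)} = {x | c ≤ T f x} := by simp only [hc]
    have hφf : {x | q ≤ (φ ∘ f) x} = {x | c ≤ f x} := by simp only [Function.comp_apply, hc]
    rw [hTf]
    rw [hφf] at hg
    exact (hT.setOf_le_ae_eq_rearrangedSet hf (essInfE_lt_of_essInfE_comp_lt hc hq)).trans hg.symm
  · push Not at hne
    have hempty : ∀ g : E → ℝ, {x | q ≤ φ (g x)} = ∅ := fun g =>
      eq_empty_of_forall_notMem fun x hx => (hne _).not_ge hx
    rw [hempty]
    refine (hg.trans (ae_eq_empty.2 ?_)).symm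
    rw [show {x | q ≤ (φ ∘ f) x} = ∅ from hempty f,
      hT.measure_rearrangedSet MeasurableSet.empty (by simp), measure_empty]

lemma IsRearrangement.setOf_le_comp_ae_eq
    {T : (E → ℝ) → (E → ℝ)} (hT : IsRearrangement T) (hφ : Monotone φ)
    (hrc : ∀ a, ContinuousWithinAt φ (Ici a) a) {f : E → ℝ} (hf : Symmetrizable f) (q : ℝ) :
    {x | q ≤ φ (T f x)} =ᵐ[volume] {x | q ≤ T (φ ∘ f) x} := by
  rcases le_or_gt (q : EReal) (essInfE (φ ∘ f)) with hq | hq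
  · exact hT.setOf_le_comp_ae_eq_of_le_essInfE hφ hrc hf hq
  · exact hT.setOf_le_comp_ae_eq_of_essInfE_lt hφ hrc hf hq

end

theorem stmt_6 {n : ℕ}
    (T : (EuclideanSpace ℝ (Fin n) → ℝ) → (EuclideanSpace ℝ (Fin n) → ℝ))
    (hmap : ∀ f, Symmetrizable f → Symmetrizable (T f))
    (hequi : ∀ f, Symmetrizable f → ∀ t : ℝ,
      volume {x | t < T f x} = volume {x | t < f x})
    (hmono : ∀ f g, Symmetrizable f → Symmetrizable g →
      f ≤ᵐ[volume] g → T f ≤ᵐ[volume] T g)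
    (φ : ℝ → ℝ) (hφmono : Monotone φ)
    (hφrc : ∀ a : ℝ, ContinuousWithinAt φ (Ici a) a)
    (f : EuclideanSpace ℝ (Fin n) → ℝ) (hf : Symmetrizable f) :
    Symmetrizable (φ ∘ f) ∧ (fun x => φ (T f x)) =ᵐ[volume] T (φ ∘ f) := by
  have hT : IsRearrangement T := ⟨hmap, hequi, hmono⟩
  exact ⟨hf.comp_monotone hφmono hφrc, EventuallyEq.of_forall_setOf_le fun q =>
    hT.setOf_le_comp_ae_eq hφmono hφrc hf q⟩
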